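/- Let ρ₁, ρ₂, ρ₃ be density matrices of the same dimension d, and write Fᵢⱼ = F(ρᵢ; ρⱼ). Then |√F₁₂ − √F₁₃| ≤ √(1 − F₂₃), and consequently |F₁₂ − F₁₃| ≤ 2 √(1 − F₂₃). -/

import Mathlib

open scoped Classical

open Matrix ComplexOrder

/-- The positive semidefinite square root of a matrix: the unique PSD square root
when the matrix is PSD, and `0` otherwise. -/
noncomputable def msqrt {n : Type*} [Fintype n] [DecidableEq n]
    (A : Matrix n n ℂ) : Matrix n n ℂ :=
  if h : A.PosSemidef then
    (h.1.eigenvectorUnitary : Matrix n n ℂ) * diagonal ((↑) ∘ (√·) ∘ h.1.eigenvalues) *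
      (star h.1.eigenvectorUnitary : Matrix n n ℂ)
  else 0

/-- Fidelity between two states: `F(ρ₁; ρ₂) = (tr √(√ρ₁ · ρ₂ · √ρ₁))²`. -/
noncomputable def fidelity {n : Type*} [Fintype n] [DecidableEq n]
    (ρ₁ ρ₂ : Matrix n n ℂ) : ℝ :=
  ((msqrt (msqrt ρ₁ * ρ₂ * msqrt ρ₁)).trace).re ^ 2

/-!
Write `√ρ` for the positive square root. Then `√F(ρ, σ) = ‖√ρ √σ‖₁` (trace norm), and by the
polar decomposition `‖M‖₁ = tr (M V)` for some unitary `V`, while `|tr (M V)| ≤ ‖M‖₁` for every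
unitary `V`. With `V`, `W` attaining `‖√ρ₁ √ρ₂‖₁` and `‖√ρ₂ √ρ₃‖₁`, the Hilbert–Schmidt inner
product `⟪A, B⟫ = tr (Aᴴ B)` turns the purifications `x = √ρ₁`, `y = √ρ₂ V`, `z = √ρ₃ W V` into
unit vectors with `⟪x, y⟫ = √F₁₂`, `|⟪x, z⟫| ≤ √F₁₃` and `⟪y, z⟫ = √F₂₃`. The Gram determinant
of three unit vectors is nonnegative, which amounts to `(|⟪x, y⟫| - |⟪x, z⟫|)² ≤ 1 - |⟪y, z⟫|²`;
hence `√F₁₂ - √F₁₃ ≤ √(1 - F₂₃)`, and exchanging `ρ₂` and `ρ₃` bounds the absolute value.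
Finally `|F₁₂ - F₁₃| = |√F₁₂ - √F₁₃| (√F₁₂ + √F₁₃)` with `√F ≤ 1`.
-/

open scoped InnerProductSpace ComplexConjugate MatrixOrder

theorem abs_sq_sub_sq_le_two_mul_abs_sub {a b : ℝ} (ha : 0 ≤ a) (ha₁ : a ≤ 1) (hb : 0 ≤ b)
    (hb₁ : b ≤ 1) : |a ^ 2 - b ^ 2| ≤ 2 * |a - b| := by
  rw [sq_sub_sq, abs_mul, abs_of_nonneg (add_nonneg ha hb)]
  exact mul_le_mul_of_nonneg_right (by linarith) (abs_nonneg _)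

section GramInequality

variable {𝕜 E : Type*} [RCLike 𝕜] [SeminormedAddCommGroup E] [InnerProductSpace 𝕜 E]

theorem norm_inner_sq_add_sq_add_sq_le {x y z : E} (hx : ‖x‖ = 1) (hy : ‖y‖ = 1)
    (hz : ‖z‖ = 1) :
    ‖⟪x, y⟫_𝕜‖ ^ 2 + ‖⟪x, z⟫_𝕜‖ ^ 2 + ‖⟪y, z⟫_𝕜‖ ^ 2 ≤
      1 + 2 * (‖⟪x, y⟫_𝕜‖ * ‖⟪x, z⟫_𝕜‖ * ‖⟪y, z⟫_𝕜‖) := by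
  have hdet := (posSemidef_gram 𝕜 ![x, y, z]).det_nonneg
  have hunit : ∀ w : E, ‖w‖ = 1 → ⟪w, w⟫_𝕜 = 1 := fun w hw => by
    rw [inner_self_eq_norm_sq_to_K, hw]; simp
  rw [det_fin_three] at hdet
  simp only [gram_apply, cons_val_zero, cons_val_one, cons_val_two, head_cons, tail_cons,
    hunit x hx, hunit y hy, hunit z hz] at hdet
  rw [← inner_conj_symm y x, ← inner_conj_symm z x, ← inner_conj_symm z y] at hdet
  set α := ⟪x, y⟫_𝕜
  set β := ⟪x, z⟫_𝕜
  set γ := ⟪y, z⟫_𝕜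
  have hcycle : β * conj α * conj γ = conj (α * γ * conj β) := by
    simp only [map_mul, RCLike.conj_conj]; ring
  have hsq : ∀ w : 𝕜, RCLike.re (w * conj w) = ‖w‖ ^ 2 := fun w => by
    rw [RCLike.mul_conj]; norm_cast
  have hprod : RCLike.re (α * γ * conj β) ≤ ‖α‖ * ‖β‖ * ‖γ‖ :=
    (RCLike.re_le_norm _).trans_eq (by simp only [norm_mul, RCLike.norm_conj]; ring)
  have hre := (RCLike.nonneg_iff.1 hdet).1
  simp only [mul_one, one_mul, hcycle, map_sub, map_add, RCLike.one_re, RCLike.conj_re, hsq] at hre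
  linarith

theorem abs_norm_inner_sub_norm_inner_le {x y z : E} (hx : ‖x‖ = 1) (hy : ‖y‖ = 1)
    (hz : ‖z‖ = 1) :
    |‖⟪x, y⟫_𝕜‖ - ‖⟪x, z⟫_𝕜‖| ≤ √(1 - ‖⟪y, z⟫_𝕜‖ ^ 2) := by
  have hgram := norm_inner_sq_add_sq_add_sq_le (𝕜 := 𝕜) hx hy hz
  have hyz : ‖⟪y, z⟫_𝕜‖ ≤ 1 := (norm_inner_le_norm y z).trans_eq (by rw [hy, hz, one_mul])
  refine Real.abs_le_sqrt ?_
  nlinarith [mul_nonneg (mul_nonneg (norm_nonneg ⟪x, y⟫_𝕜) (norm_nonneg ⟪x, z⟫_𝕜))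
    (sub_nonneg.2 hyz)]

end GramInequality

section HilbertSchmidt

variable {𝕜 : Type*} [RCLike 𝕜] {m n : Type*} [Fintype m] [Fintype n]

theorem Matrix.inner_toLp_vec (A B : Matrix m n 𝕜) :
    ⟪WithLp.toLp 2 A.vec, WithLp.toLp 2 B.vec⟫_𝕜 = (Aᴴ * B).trace := by
  rw [EuclideanSpace.inner_eq_star_dotProduct, dotProduct_comm, star_vec_dotProduct_vec]

theorem Matrix.norm_toLp_vec_sq (A : Matrix m n 𝕜) :
    ‖WithLp.toLp 2 A.vec‖ ^ 2 = RCLike.re (Aᴴ * A).trace := by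
  rw [← inner_toLp_vec, inner_self_eq_norm_sq]

theorem Matrix.norm_toLp_vec_eq_one {A : Matrix m n 𝕜} (h : (Aᴴ * A).trace = 1) :
    ‖WithLp.toLp 2 A.vec‖ = 1 := by
  rw [← pow_eq_one_iff_of_nonneg (norm_nonneg _) two_ne_zero, norm_toLp_vec_sq, h, RCLike.one_re]

end HilbertSchmidt

section Unitary

variable {R : Type*} [CommRing R] [StarRing R] {n : Type*} [Fintype n] [DecidableEq n]

theorem Matrix.trace_star_mul_mul_of_mem_unitary {V : Matrix n n R} (hV : V ∈ unitary _)
    (A : Matrix n n R) : (star V * A * V).trace = A.trace := by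
  rw [trace_mul_cycle, Unitary.mul_star_self_of_mem hV, one_mul]

theorem Matrix.trace_conjTranspose_mul_self_mul_unitary {V : Matrix n n R} (hV : V ∈ unitary _)
    (A : Matrix n n R) : ((A * V)ᴴ * (A * V)).trace = (Aᴴ * A).trace := by
  rw [conjTranspose_mul, ← star_eq_conjTranspose V, ← trace_star_mul_mul_of_mem_unitary hV (Aᴴ * A)]
  simp only [Matrix.mul_assoc]

end Unitary

theorem LinearMap.exists_linearIsometryEquiv_apply_eq {𝕜 E : Type*} [RCLike 𝕜]
    [NormedAddCommGroup E] [InnerProductSpace 𝕜 E] [FiniteDimensional 𝕜 E] (f g : E →ₗ[𝕜] E)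
    (h : ∀ x, ‖g x‖ = ‖f x‖) : ∃ e : E ≃ₗᵢ[𝕜] E, ∀ x, e (f x) = g x := by
  have hker : ker f ≤ ker g := fun x hx => by
    rw [mem_ker, ← norm_eq_zero, h, mem_ker.1 hx, norm_zero]
  let L : range f →ₗ[𝕜] E := (ker f).liftQ g hker ∘ₗ f.quotKerEquivRange.symm.toLinearMap
  have hL : ∀ x, L ⟨f x, mem_range_self f x⟩ = g x := fun x => by
    simp [L, quotKerEquivRange_symm_apply_image]
  let L' : range f →ₗᵢ[𝕜] E := ⟨L, by rintro ⟨_, x, rfl⟩; rw [hL, h]; rfl⟩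
  exact ⟨L'.extend.toLinearIsometryEquiv rfl, fun x => (L'.extend_apply ⟨f x, _⟩).trans (hL x)⟩

namespace Matrix

variable {𝕜 : Type*} [RCLike 𝕜] {n : Type*} [Fintype n] [DecidableEq n]

theorem exists_mem_unitary_mul_eq_of_star_mul_self_eq {M P : Matrix n n 𝕜}
    (h : star M * M = star P * P) : ∃ U ∈ unitary (Matrix n n 𝕜), M = U * P := by
  let T := toEuclideanCLM (n := n) (𝕜 := 𝕜)
  have hT : ∀ A, ContinuousLinearMap.adjoint (T A) ∘L T A = T (star A * A) := fun A => by
    rw [map_mul, map_star]; rfl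
  have hnorm : ∀ x, ‖T M x‖ = ‖T P x‖ := fun x => by
    have hM := (T M).apply_norm_sq_eq_inner_adjoint_left x
    rw [hT, h, ← hT, ← (T P).apply_norm_sq_eq_inner_adjoint_left] at hM
    exact (sq_eq_sq₀ (norm_nonneg _) (norm_nonneg _)).1 hM
  obtain ⟨e, he⟩ := (T P).toLinearMap.exists_linearIsometryEquiv_apply_eq (T M).toLinearMap hnorm
  let u := Unitary.linearIsometryEquiv.symm e
  refine ⟨T.symm u, Unitary.map_mem T.symm u.2, T.injective ?_⟩
  change T M = T (T.symm u * P)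
  ext1 x
  rw [map_mul, T.apply_symm_apply]
  exact (he x).symm

theorem exists_mem_unitary_mul_abs (M : Matrix n n 𝕜) :
    ∃ U ∈ unitary (Matrix n n 𝕜), M = U * CFC.abs M :=
  exists_mem_unitary_mul_eq_of_star_mul_self_eq <| by
    rw [(CFC.abs_nonneg M).isSelfAdjoint.star_eq, CFC.abs_mul_abs]

noncomputable def traceNorm (M : Matrix n n 𝕜) : ℝ := RCLike.re (CFC.abs M).trace

theorem ofReal_traceNorm (M : Matrix n n 𝕜) : (traceNorm M : 𝕜) = (CFC.abs M).trace := by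
  obtain ⟨x, -, hx⟩ :=
    RCLike.nonneg_iff_exists_ofReal.1 (CFC.abs_nonneg M).posSemidef.trace_nonneg
  rw [traceNorm, ← hx, RCLike.ofReal_re]

theorem traceNorm_nonneg (M : Matrix n n 𝕜) : 0 ≤ traceNorm M :=
  (RCLike.nonneg_iff.1 (CFC.abs_nonneg M).posSemidef.trace_nonneg).1

theorem exists_mem_unitary_trace_mul_eq_traceNorm (M : Matrix n n 𝕜) :
    ∃ V ∈ unitary (Matrix n n 𝕜), (M * V).trace = traceNorm M := by
  obtain ⟨U, hU, hM⟩ := exists_mem_unitary_mul_abs M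
  refine ⟨star U, Unitary.star_mem hU, ?_⟩
  rw [ofReal_traceNorm, ← trace_star_mul_mul_of_mem_unitary (Unitary.star_mem hU) (CFC.abs M),
    star_star, ← hM]

theorem norm_trace_mul_le_traceNorm (M : Matrix n n 𝕜) {V : Matrix n n 𝕜}
    (hV : V ∈ unitary (Matrix n n 𝕜)) : ‖(M * V).trace‖ ≤ traceNorm M := by
  obtain ⟨U, hU, hM⟩ := exists_mem_unitary_mul_abs M
  set Q := CFC.sqrt (CFC.abs M)
  have hQQ : Qᴴ * Q = CFC.abs M := by
    rw [← star_eq_conjTranspose, (CFC.sqrt_nonneg (CFC.abs M)).isSelfAdjoint.star_eq,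
      CFC.sqrt_mul_sqrt_self _ (CFC.abs_nonneg M)]
  have htr : (M * V).trace = (Qᴴ * (Q * (V * U))).trace := by
    rw [← Matrix.mul_assoc, hQQ]
    nth_rw 1 [hM]
    rw [Matrix.mul_assoc, trace_mul_comm, Matrix.mul_assoc]
  have hnorm : ‖WithLp.toLp 2 (Q * (V * U)).vec‖ = ‖WithLp.toLp 2 Q.vec‖ := by
    rw [← sq_eq_sq₀ (norm_nonneg _) (norm_nonneg _), norm_toLp_vec_sq, norm_toLp_vec_sq,
      trace_conjTranspose_mul_self_mul_unitary (mul_mem hV hU)]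
  calc ‖(M * V).trace‖ = ‖⟪WithLp.toLp 2 Q.vec, WithLp.toLp 2 (Q * (V * U)).vec⟫_𝕜‖ := by
        rw [inner_toLp_vec, htr]
    _ ≤ ‖WithLp.toLp 2 Q.vec‖ * ‖WithLp.toLp 2 (Q * (V * U)).vec‖ := norm_inner_le_norm _ _
    _ = traceNorm M := by rw [hnorm, ← sq, norm_toLp_vec_sq, hQQ, traceNorm]

theorem traceNorm_conjTranspose (M : Matrix n n 𝕜) : traceNorm Mᴴ = traceNorm M := by
  suffices h : ∀ M : Matrix n n 𝕜, traceNorm Mᴴ ≤ traceNorm M from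
    le_antisymm (h M) (by simpa using h Mᴴ)
  intro M
  obtain ⟨V, hV, htr⟩ := exists_mem_unitary_trace_mul_eq_traceNorm Mᴴ
  calc traceNorm Mᴴ = ‖(Mᴴ * V).trace‖ := by
        rw [htr, RCLike.norm_ofReal, abs_of_nonneg (traceNorm_nonneg _)]
    _ = ‖(M * star V).trace‖ := by
        rw [← norm_star, ← trace_conjTranspose, conjTranspose_mul, conjTranspose_conjTranspose,
          trace_mul_comm, star_eq_conjTranspose]
    _ ≤ traceNorm M := norm_trace_mul_le_traceNorm M (Unitary.star_mem hV)

theorem conjTranspose_sqrt (A : Matrix n n 𝕜) : (CFC.sqrt A)ᴴ = CFC.sqrt A :=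
  (CFC.sqrt_nonneg A).isSelfAdjoint.star_eq

theorem conjTranspose_sqrt_mul_sqrt {A : Matrix n n 𝕜} (h : A.PosSemidef) :
    (CFC.sqrt A)ᴴ * CFC.sqrt A = A := by
  rw [conjTranspose_sqrt, CFC.sqrt_mul_sqrt_self A h.nonneg]

theorem norm_toLp_vec_sqrt_mul_eq_one {A V : Matrix n n 𝕜} (hA : A.PosSemidef)
    (htr : A.trace = 1) (hV : V ∈ unitary (Matrix n n 𝕜)) :
    ‖WithLp.toLp 2 (CFC.sqrt A * V).vec‖ = 1 :=
  norm_toLp_vec_eq_one <| by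
    rw [trace_conjTranspose_mul_self_mul_unitary hV, conjTranspose_sqrt_mul_sqrt hA, htr]

end Matrix

section Fidelity

variable {n : Type*} [Fintype n] [DecidableEq n]

theorem msqrt_eq_sqrt {A : Matrix n n ℂ} (h : A.PosSemidef) : msqrt A = CFC.sqrt A := by
  rw [CFC.sqrt_eq_real_sqrt A h.nonneg, cfcₙ_eq_cfc, msqrt, dif_pos h, h.1.cfc_eq,
    IsHermitian.cfc, Unitary.conjStarAlgAut_apply]
  rfl

theorem fidelity_nonneg (ρ σ : Matrix n n ℂ) : 0 ≤ fidelity ρ σ := sq_nonneg _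

theorem fidelity_eq_traceNorm_sq {ρ σ : Matrix n n ℂ} (hρ : ρ.PosSemidef) (hσ : σ.PosSemidef) :
    fidelity ρ σ = traceNorm (CFC.sqrt σ * CFC.sqrt ρ) ^ 2 := by
  set N := CFC.sqrt σ * CFC.sqrt ρ
  have hN : star N * N = msqrt ρ * σ * msqrt ρ :=
    calc star N * N = CFC.sqrt ρ * (CFC.sqrt σ * CFC.sqrt σ) * CFC.sqrt ρ := by
          rw [star_eq_conjTranspose, conjTranspose_mul, conjTranspose_sqrt, conjTranspose_sqrt]
          simp only [N, Matrix.mul_assoc]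
      _ = msqrt ρ * σ * msqrt ρ := by rw [CFC.sqrt_mul_sqrt_self σ hσ.nonneg, msqrt_eq_sqrt hρ]
  rw [fidelity, ← hN, msqrt_eq_sqrt (star_mul_self_nonneg N).posSemidef, traceNorm, CFC.abs]
  rfl

theorem sqrt_fidelity_eq_traceNorm {ρ σ : Matrix n n ℂ} (hρ : ρ.PosSemidef)
    (hσ : σ.PosSemidef) : √(fidelity ρ σ) = traceNorm (CFC.sqrt ρ * CFC.sqrt σ) := by
  rw [fidelity_eq_traceNorm_sq hρ hσ, Real.sqrt_sq (traceNorm_nonneg _), ← traceNorm_conjTranspose,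
    conjTranspose_mul, conjTranspose_sqrt, conjTranspose_sqrt]

theorem fidelity_comm {ρ σ : Matrix n n ℂ} (hρ : ρ.PosSemidef) (hσ : σ.PosSemidef) :
    fidelity ρ σ = fidelity σ ρ := by
  rw [fidelity_eq_traceNorm_sq hρ hσ, fidelity_eq_traceNorm_sq hσ hρ, ← traceNorm_conjTranspose,
    conjTranspose_mul, conjTranspose_sqrt, conjTranspose_sqrt]

theorem sqrt_fidelity_le_one {ρ σ : Matrix n n ℂ} (hρ : ρ.PosSemidef) (hρt : ρ.trace = 1)
    (hσ : σ.PosSemidef) (hσt : σ.trace = 1) : √(fidelity ρ σ) ≤ 1 := by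
  obtain ⟨V, hV, htr⟩ := exists_mem_unitary_trace_mul_eq_traceNorm (CFC.sqrt ρ * CFC.sqrt σ)
  calc √(fidelity ρ σ) = ‖(CFC.sqrt ρ * CFC.sqrt σ * V).trace‖ := by
        rw [htr, RCLike.norm_ofReal, abs_of_nonneg (traceNorm_nonneg _),
          sqrt_fidelity_eq_traceNorm hρ hσ]
    _ = ‖⟪WithLp.toLp 2 (CFC.sqrt ρ * 1).vec, WithLp.toLp 2 (CFC.sqrt σ * V).vec⟫_ℂ‖ := by
        rw [inner_toLp_vec, mul_one, conjTranspose_sqrt, Matrix.mul_assoc]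
    _ ≤ ‖WithLp.toLp 2 (CFC.sqrt ρ * 1).vec‖ * ‖WithLp.toLp 2 (CFC.sqrt σ * V).vec‖ :=
        norm_inner_le_norm _ _
    _ = 1 := by
        rw [norm_toLp_vec_sqrt_mul_eq_one hρ hρt (one_mem _),
          norm_toLp_vec_sqrt_mul_eq_one hσ hσt hV, one_mul]

theorem sqrt_fidelity_sub_sqrt_fidelity_le {ρ₁ ρ₂ ρ₃ : Matrix n n ℂ} (h₁ : ρ₁.PosSemidef)
    (h₁t : ρ₁.trace = 1) (h₂ : ρ₂.PosSemidef) (h₂t : ρ₂.trace = 1) (h₃ : ρ₃.PosSemidef)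
    (h₃t : ρ₃.trace = 1) :
    √(fidelity ρ₁ ρ₂) - √(fidelity ρ₁ ρ₃) ≤ √(1 - fidelity ρ₂ ρ₃) := by
  obtain ⟨V, hV, hV'⟩ :=
    exists_mem_unitary_trace_mul_eq_traceNorm (CFC.sqrt ρ₁ * CFC.sqrt ρ₂)
  obtain ⟨W, hW, hW'⟩ :=
    exists_mem_unitary_trace_mul_eq_traceNorm (CFC.sqrt ρ₂ * CFC.sqrt ρ₃)
  rw [← sqrt_fidelity_eq_traceNorm h₁ h₂] at hV'
  rw [← sqrt_fidelity_eq_traceNorm h₂ h₃] at hW'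
  set x := WithLp.toLp 2 (CFC.sqrt ρ₁ * 1).vec
  set y := WithLp.toLp 2 (CFC.sqrt ρ₂ * V).vec
  set z := WithLp.toLp 2 (CFC.sqrt ρ₃ * (W * V)).vec
  have hxy : ⟪x, y⟫_ℂ = √(fidelity ρ₁ ρ₂) := by
    rw [inner_toLp_vec, mul_one, conjTranspose_sqrt, ← Matrix.mul_assoc]
    exact hV'
  have hxz : ‖⟪x, z⟫_ℂ‖ ≤ √(fidelity ρ₁ ρ₃) := by
    rw [inner_toLp_vec, mul_one, conjTranspose_sqrt, ← Matrix.mul_assoc,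
      sqrt_fidelity_eq_traceNorm h₁ h₃]
    exact norm_trace_mul_le_traceNorm _ (mul_mem hW hV)
  have hyz : ⟪y, z⟫_ℂ = √(fidelity ρ₂ ρ₃) :=
    calc ⟪y, z⟫_ℂ = (star V * (CFC.sqrt ρ₂ * CFC.sqrt ρ₃ * W) * V).trace := by
          rw [inner_toLp_vec, conjTranspose_mul, conjTranspose_sqrt, star_eq_conjTranspose]
          simp only [Matrix.mul_assoc]
      _ = √(fidelity ρ₂ ρ₃) := by rw [trace_star_mul_mul_of_mem_unitary hV]; exact hW'
  have hgram := abs_norm_inner_sub_norm_inner_le (𝕜 := ℂ)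
    (norm_toLp_vec_sqrt_mul_eq_one h₁ h₁t (one_mem _))
    (norm_toLp_vec_sqrt_mul_eq_one h₂ h₂t hV) (norm_toLp_vec_sqrt_mul_eq_one h₃ h₃t (mul_mem hW hV))
  rw [hxy, hyz, Complex.norm_real, Complex.norm_real, Real.norm_of_nonneg (Real.sqrt_nonneg _),
    Real.norm_of_nonneg (Real.sqrt_nonneg _), Real.sq_sqrt (fidelity_nonneg _ _)] at hgram
  linarith [le_abs_self (√(fidelity ρ₁ ρ₂) - ‖⟪x, z⟫_ℂ‖)]

end Fidelity

/-- Continuity of fidelity: `|√F₁₂ − √F₁₃| ≤ √(1 − F₂₃)` and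
`|F₁₂ − F₁₃| ≤ 2√(1 − F₂₃)`. -/
theorem fidelity_continuity_estimate {d : ℕ}
    {ρ₁ ρ₂ ρ₃ : Matrix (Fin d) (Fin d) ℂ}
    (h₁ : ρ₁.PosSemidef) (h₁t : ρ₁.trace = 1)
    (h₂ : ρ₂.PosSemidef) (h₂t : ρ₂.trace = 1)
    (h₃ : ρ₃.PosSemidef) (h₃t : ρ₃.trace = 1) :
    |Real.sqrt (fidelity ρ₁ ρ₂) - Real.sqrt (fidelity ρ₁ ρ₃)| ≤
        Real.sqrt (1 - fidelity ρ₂ ρ₃) ∧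
    |fidelity ρ₁ ρ₂ - fidelity ρ₁ ρ₃| ≤ 2 * Real.sqrt (1 - fidelity ρ₂ ρ₃) := by
  have h₁₂₃ := sqrt_fidelity_sub_sqrt_fidelity_le h₁ h₁t h₂ h₂t h₃ h₃t
  have h₁₃₂ := sqrt_fidelity_sub_sqrt_fidelity_le h₁ h₁t h₃ h₃t h₂ h₂t
  rw [fidelity_comm h₃ h₂] at h₁₃₂
  have hsqrt := abs_sub_le_iff.2 ⟨h₁₂₃, h₁₃₂⟩
  refine ⟨hsqrt, ?_⟩
  rw [← Real.sq_sqrt (fidelity_nonneg ρ₁ ρ₂), ← Real.sq_sqrt (fidelity_nonneg ρ₁ ρ₃)]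
  calc _ ≤ 2 * |√(fidelity ρ₁ ρ₂) - √(fidelity ρ₁ ρ₃)| :=
        abs_sq_sub_sq_le_two_mul_abs_sub (Real.sqrt_nonneg _) (sqrt_fidelity_le_one h₁ h₁t h₂ h₂t)
          (Real.sqrt_nonneg _) (sqrt_fidelity_le_one h₁ h₁t h₃ h₃t)
    _ ≤ _ := by gcongr
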